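/- arXiv:1609.00498 — 9 statements merged into one kernel-verified Lean document; each statement's English description precedes it below -/
import Mathlib

section
/- Let p(x,y,z) be a complex homogeneous polynomial of degree n with the coefficient a_{n0} of x^n nonzero. Let α_1,...,α_n be the roots (with multiplicity) of p(α,1,0) = 0 as a degree-n polynomial in α, and let β_1,...,β_n be the roots of p(β,0,1) = 0. Then the polynomial p(x,y,z) − a_{n0} ∏_{j=1}^n (x − α_j y − β_j z) is divisible by y·z; that is, there exists a homogeneous polynomial q of degree n−2 with p(x,y,z) − a_{n0} ∏_{j=1}^n (x − α_j y − β_j z) = y·z·q(x,y,z). -/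
open MvPolynomial

lemma aux_X_dvd_sub_aeval (i : Fin 3) (f : MvPolynomial (Fin 3) ℂ) :
    X i ∣ f - aeval (Function.update X i (0 : MvPolynomial (Fin 3) ℂ)) f := by
  induction f using MvPolynomial.induction_on with
  | C a => simp
  | add p q hp hq =>
      rw [map_add, ← sub_add_sub_comm]
      exact dvd_add hp hq
  | mul_X p j hp =>
      rw [map_mul, aeval_X]
      by_cases h : j = i
      · subst h
        rw [Function.update_self, mul_zero, sub_zero]
        exact dvd_mul_left _ _
      · rw [Function.update_of_ne h]
        have : p * X j - aeval (Function.update X i (0 : MvPolynomial (Fin 3) ℂ)) p * X j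
            = (p - aeval (Function.update X i (0 : MvPolynomial (Fin 3) ℂ)) p) * X j := by ring
        rw [this]
        exact Dvd.dvd.mul_right hp _

lemma aux_eval_smul {n : ℕ} {p : MvPolynomial (Fin 3) ℂ} (hp : p.IsHomogeneous n)
    (c : ℂ) (v : Fin 3 → ℂ) : eval (c • v) p = c ^ n * eval v p := by
  rw [eval_eq', eval_eq', Finset.mul_sum]
  refine Finset.sum_congr rfl fun d hd => ?_
  have hdeg : ∑ i, d i = n := by
    have := hp (mem_support_iff.mp hd)
    rw [Finsupp.weight_apply, Finsupp.sum_fintype] at this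
    · simpa using this
    · intro _; simp
  simp only [Pi.smul_apply, smul_eq_mul, mul_pow, Finset.prod_mul_distrib,
    Finset.prod_pow_eq_pow_sum, hdeg]
  ring

lemma aux_eval_aeval (v : Fin 3 → ℂ) (g : Fin 3 → MvPolynomial (Fin 3) ℂ)
    (f : MvPolynomial (Fin 3) ℂ) :
    eval v (aeval g f) = eval (fun i => eval v (g i)) f := by
  rw [aeval_def, eval₂_comp_left (eval v)]
  have h1 : (eval v).comp (algebraMap ℂ (MvPolynomial (Fin 3) ℂ)) = RingHom.id ℂ := by
    ext x; simp
  rw [h1]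
  rfl

theorem stmt2 (n : ℕ) (hn : 2 ≤ n) (p : MvPolynomial (Fin 3) ℂ)
    (hhom : p.IsHomogeneous n)
    (a : ℂ) (ha : a = coeff (Finsupp.single 0 n) p) (ha0 : a ≠ 0)
    (α β : Fin n → ℂ)
    (hα : ∀ t : ℂ, eval ![t, 1, 0] p = a * ∏ j, (t - α j))
    (hβ : ∀ t : ℂ, eval ![t, 0, 1] p = a * ∏ j, (t - β j)) :
    ∃ q : MvPolynomial (Fin 3) ℂ, q.IsHomogeneous (n - 2) ∧
      p - C a * ∏ j, (X 0 - C (α j) * X 1 - C (β j) * X 2) = X 1 * X 2 * q := by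
  set P : MvPolynomial (Fin 3) ℂ := ∏ j, (X 0 - C (α j) * X 1 - C (β j) * X 2) with hPdef
  set r : MvPolynomial (Fin 3) ℂ := p - C a * P with hrdef
  have hP : P.IsHomogeneous n := by
    have := MvPolynomial.IsHomogeneous.prod (Finset.univ : Finset (Fin n))
      (fun j => X 0 - C (α j) * X 1 - C (β j) * X 2) (fun _ => 1)
      (fun j _ => (((isHomogeneous_X ℂ (0 : Fin 3)).sub ((isHomogeneous_X ℂ (1 : Fin 3)).C_mul (α j))).sub
        ((isHomogeneous_X ℂ (2 : Fin 3)).C_mul (β j))))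
    rw [hPdef]
    simpa using this
  have hr : r.IsHomogeneous n := hhom.sub (hP.C_mul a)
  have hr10 : ∀ t : ℂ, eval ![t, 1, 0] r = 0 := by
    intro t
    have hPe : eval ![t, 1, 0] P = ∏ j, (t - α j) := by
      rw [hPdef, map_prod]
      refine Finset.prod_congr rfl fun j _ => ?_
      simp
    rw [hrdef, map_sub, map_mul, eval_C, hPe, hα, sub_self]
  have hr01 : ∀ t : ℂ, eval ![t, 0, 1] r = 0 := by
    intro t
    have hPe : eval ![t, 0, 1] P = ∏ j, (t - β j) := by
      rw [hPdef, map_prod]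
      refine Finset.prod_congr rfl fun j _ => ?_
      simp
    rw [hrdef, map_sub, map_mul, eval_C, hPe, hβ, sub_self]
  have hv2 : ∀ x y : ℂ, y ≠ 0 → eval ![x, y, 0] r = 0 := by
    intro x y hy
    have hsm : ![x, y, 0] = y • ![x / y, 1, 0] := by
      funext i
      fin_cases i <;> simp [hy] <;> field_simp
    rw [hsm, aux_eval_smul hr, hr10, mul_zero]
  have hv1 : ∀ x z : ℂ, z ≠ 0 → eval ![x, 0, z] r = 0 := by
    intro x z hz
    have hsm : ![x, 0, z] = z • ![x / z, 0, 1] := by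
      funext i
      fin_cases i <;> simp [hz] <;> field_simp
    rw [hsm, aux_eval_smul hr, hr01, mul_zero]
  have hφ2 : aeval (Function.update X 2 (0 : MvPolynomial (Fin 3) ℂ)) r = 0 := by
    have key : X 1 * aeval (Function.update X 2 (0 : MvPolynomial (Fin 3) ℂ)) r = 0 := by
      apply MvPolynomial.funext
      intro v
      rw [map_zero, map_mul, eval_X, aux_eval_aeval]
      have hcomp : (fun i => eval v (Function.update X 2 (0 : MvPolynomial (Fin 3) ℂ) i))
          = ![v 0, v 1, 0] := by
        funext i
        fin_cases i <;> simp [Function.update]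
      rw [hcomp]
      by_cases h : v 1 = 0
      · rw [h, zero_mul]
      · rw [hv2 (v 0) (v 1) h, mul_zero]
    rcases mul_eq_zero.mp key with h | h
    · exact absurd h (X_ne_zero 1)
    · exact h
  have hφ1 : aeval (Function.update X 1 (0 : MvPolynomial (Fin 3) ℂ)) r = 0 := by
    have key : X 2 * aeval (Function.update X 1 (0 : MvPolynomial (Fin 3) ℂ)) r = 0 := by
      apply MvPolynomial.funext
      intro v
      rw [map_zero, map_mul, eval_X, aux_eval_aeval]
      have hcomp : (fun i => eval v (Function.update X 1 (0 : MvPolynomial (Fin 3) ℂ) i))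
          = ![v 0, 0, v 2] := by
        funext i
        fin_cases i <;> simp [Function.update]
      rw [hcomp]
      by_cases h : v 2 = 0
      · rw [h, zero_mul]
      · rw [hv1 (v 0) (v 2) h, mul_zero]
    rcases mul_eq_zero.mp key with h | h
    · exact absurd h (X_ne_zero 2)
    · exact h
  have hd2 : X 2 ∣ r := by
    have := aux_X_dvd_sub_aeval 2 r
    rwa [hφ2, sub_zero] at this
  obtain ⟨s, hs⟩ := hd2
  have hφ1s : aeval (Function.update X 1 (0 : MvPolynomial (Fin 3) ℂ)) s = 0 := by
    have key : (X 2 : MvPolynomial (Fin 3) ℂ)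
        * aeval (Function.update X 1 (0 : MvPolynomial (Fin 3) ℂ)) s = 0 := by
      rw [hs, map_mul, aeval_X, Function.update_of_ne (by decide)] at hφ1
      exact hφ1
    rcases mul_eq_zero.mp key with h | h
    · exact absurd h (X_ne_zero 2)
    · exact h
  have hd1 : X 1 ∣ s := by
    have := aux_X_dvd_sub_aeval 1 s
    rwa [hφ1s, sub_zero] at this
  obtain ⟨q, hq⟩ := hd1
  have hrq : r = X 1 * X 2 * q := by rw [hs, hq]; ring
  refine ⟨q, ?_, hrq⟩
  intro d hd
  have hco : coeff ((Finsupp.single 1 1 + Finsupp.single 2 1) + d) r = coeff d q := by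
    have hX : (X 1 : MvPolynomial (Fin 3) ℂ) * X 2
        = monomial (Finsupp.single 1 1 + Finsupp.single 2 1) 1 := by
      rw [X, X, monomial_mul, mul_one]
    rw [hrq, hX, coeff_monomial_mul, one_mul]
  have hw := hr (show coeff ((Finsupp.single 1 1 + Finsupp.single 2 1) + d) r ≠ 0 by
    rw [hco]; exact hd)
  rw [map_add, map_add] at hw
  have h1 : (Finsupp.weight (1 : Fin 3 → ℕ)) (Finsupp.single (1 : Fin 3) 1) = 1 := by
    simp [Finsupp.weight_apply, Finsupp.sum_single_index]
  have h2 : (Finsupp.weight (1 : Fin 3 → ℕ)) (Finsupp.single (2 : Fin 3) 1) = 1 := by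
    simp [Finsupp.weight_apply, Finsupp.sum_single_index]
  rw [h1, h2] at hw
  omega
end

section
/- It is not always possible to write a homogeneous cubic p(x,y,z) as a product of three linear forms plus a term y·z·q(x,y,z) with q linear: specifically, for p(x,y,z) = x^2 y − y^3 + x z^2 + z^3, there exist no linear forms ℓ1, ℓ2, ℓ3 and linear form q with p(x,y,z) − ℓ1(x,y,z)·ℓ2(x,y,z)·ℓ3(x,y,z) = y·z·q(x,y,z). -/
open MvPolynomial

noncomputable def lin (r s t : ℂ) : MvPolynomial (Fin 3) ℂ :=
  C r * X 0 + C s * X 1 + C t * X 2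

theorem stmt4 :
    ¬ ∃ r1 s1 t1 r2 s2 t2 r3 s3 t3 rq sq tq : ℂ,
      (X 0 ^ 2 * X 1 - X 1 ^ 3 + X 0 * X 2 ^ 2 + X 2 ^ 3 : MvPolynomial (Fin 3) ℂ) -
          lin r1 s1 t1 * lin r2 s2 t2 * lin r3 s3 t3 =
        X 1 * X 2 * lin rq sq tq := by
  rintro ⟨r1, s1, t1, r2, s2, t2, r3, s3, t3, rq, sq, tq, h⟩
  have f : ∀ x y z : ℂ,
      x ^ 2 * y - y ^ 3 + x * z ^ 2 + z ^ 3 -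
          (r1 * x + s1 * y + t1 * z) * (r2 * x + s2 * y + t2 * z) *
            (r3 * x + s3 * y + t3 * z) =
        y * z * (rq * x + sq * y + tq * z) := by
    intro x y z
    have := congrArg (eval (fun i : Fin 3 => ![x, y, z] i)) h
    simpa [lin] using this
  have E1 : r1 * r2 * r3 = 0 := by linear_combination - f 1 0 0
  have E2 : s1 * r2 * r3 + r1 * s2 * r3 + r1 * r2 * s3 = 1 := by
    linear_combination (-(f 1 1 0) - f (-1) 1 0) / 2 + f 0 1 0
  have E3 : r1 * r2 * t3 + r1 * t2 * r3 + t1 * r2 * r3 = 0 := by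
    linear_combination -((f 1 0 1 + f (-1) 0 1) / 2 - f 0 0 1)
  have E5 : r1 * t2 * t3 + t1 * r2 * t3 + t1 * t2 * r3 = 1 := by
    linear_combination -(f 1 0 1 - f (-1) 0 1) / 2 + f 1 0 0
  rcases mul_eq_zero.mp E1 with h12 | hr3
  · rcases mul_eq_zero.mp h12 with hr1 | hr2
    · subst hr1
      have ht1 : t1 = 0 := by linear_combination s1 * E3 - t1 * E2
      exact one_ne_zero (by linear_combination -E5 + (r2 * t3 + t2 * r3) * ht1)
    · subst hr2
      have ht2 : t2 = 0 := by linear_combination s2 * E3 - t2 * E2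
      exact one_ne_zero (by linear_combination -E5 + (r1 * t3 + t1 * r3) * ht2)
  · subst hr3
    have ht3 : t3 = 0 := by linear_combination s3 * E3 - t3 * E2
    exact one_ne_zero (by linear_combination -E5 + (r1 * t2 + t1 * r2) * ht3)
end

section
/- Let p(x,y,z) be a complex homogeneous quadratic with a20 ≠ 0 (coefficient of x^2). Let α1, α2 be the roots of a20 α^2 + a11 α + a02 = 0 and β1, β2 the roots of a20 β^2 + a10 β + a00 = 0. Then there exists q0 ∈ C such that p(x,y,z) = det of the 2×2 matrix [[a20(x − α1 y − β1 z), −q0 y], [z, x − α2 y − β2 z]]. In particular every homogeneous quadratic with a20 ≠ 0 admits a 2×2 determinantal representation p(x,y,z) = det(xA + yB + zC). -/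
open MvPolynomial

theorem stmt6 (a20 a11 a02 a10 a01 a00 : ℂ) (ha20 : a20 ≠ 0)
    (p : MvPolynomial (Fin 3) ℂ)
    (hp : p = C a20 * X 0 ^ 2 + C a11 * X 0 * X 1 + C a02 * X 1 ^ 2 +
      C a10 * X 0 * X 2 + C a01 * X 1 * X 2 + C a00 * X 2 ^ 2)
    (α1 α2 β1 β2 : ℂ)
    (hα : ∀ t : ℂ, a20 * t ^ 2 + a11 * t + a02 = a20 * (t - α1) * (t - α2))
    (hβ : ∀ t : ℂ, a20 * t ^ 2 + a10 * t + a00 = a20 * (t - β1) * (t - β2)) :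
    ∃ q0 : ℂ, p = Matrix.det
      !![C a20 * (X 0 - C α1 * X 1 - C β1 * X 2), -(C q0) * X 1;
         X 2, X 0 - C α2 * X 1 - C β2 * X 2] := by
  have h02 : a02 = a20 * (α1 * α2) := by linear_combination hα 0
  have h11 : a11 = -(a20 * (α1 + α2)) := by linear_combination (hα 1 - hα (-1)) / 2
  have h00 : a00 = a20 * (β1 * β2) := by linear_combination hβ 0
  have h10 : a10 = -(a20 * (β1 + β2)) := by linear_combination (hβ 1 - hβ (-1)) / 2
  refine ⟨a01 - a20 * (α1 * β2 + α2 * β1), ?_⟩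
  have H02 : (C a02 : MvPolynomial (Fin 3) ℂ) = C a20 * (C α1 * C α2) := by
    rw [h02]; push_cast [C_mul]; ring
  have H11 : (C a11 : MvPolynomial (Fin 3) ℂ) = -(C a20 * (C α1 + C α2)) := by
    rw [h11]; push_cast [C_mul, C_add, C_neg]; ring
  have H00 : (C a00 : MvPolynomial (Fin 3) ℂ) = C a20 * (C β1 * C β2) := by
    rw [h00]; push_cast [C_mul]; ring
  have H10 : (C a10 : MvPolynomial (Fin 3) ℂ) = -(C a20 * (C β1 + C β2)) := by
    rw [h10]; push_cast [C_mul, C_add, C_neg]; ring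
  have Hq : (C (a01 - a20 * (α1 * β2 + α2 * β1)) : MvPolynomial (Fin 3) ℂ) =
      C a01 - C a20 * (C α1 * C β2 + C α2 * C β1) := by
    push_cast [C_sub, C_mul, C_add]; ring
  rw [hp, Matrix.det_fin_two_of, Hq]
  linear_combination H02 * (X 1 : MvPolynomial (Fin 3) ℂ) ^ 2 + H11 * X 0 * X 1 +
    H00 * (X 2 : MvPolynomial (Fin 3) ℂ) ^ 2 + H10 * X 0 * X 2
end

section
/- Every complex homogeneous quadratic polynomial p(x,y,z) of degree exactly 2 admits a determinantal representation with 2×2 complex matrices: there exist A, B, C ∈ M_2(C) such that det(xA + yB + zC) = p(x,y,z) as polynomials. -/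
open MvPolynomial

lemma fin3_degree (m : Fin 3 →₀ ℕ) : m.degree = m 0 + m 1 + m 2 := by
  rw [Finsupp.degree, ← Fin.sum_univ_three m]
  exact Finset.sum_subset (Finset.subset_univ _) (fun i _ hi => Finsupp.notMem_support_iff.mp hi)

lemma fin3_ext (m m' : Fin 3 →₀ ℕ) : m = m' ↔ m 0 = m' 0 ∧ m 1 = m' 1 ∧ m 2 = m' 2 := by
  constructor
  · rintro rfl; exact ⟨rfl, rfl, rfl⟩
  · rintro ⟨h0, h1, h2⟩; ext j; fin_cases j <;> assumption

lemma enum3 (m : Fin 3 →₀ ℕ) (h : m 0 + m 1 + m 2 = 2) :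
    m = Finsupp.single 0 2 ∨ m = Finsupp.single 1 2 ∨ m = Finsupp.single 2 2 ∨
    m = Finsupp.single 0 1 + Finsupp.single 1 1 ∨
    m = Finsupp.single 0 1 + Finsupp.single 2 1 ∨
    m = Finsupp.single 1 1 + Finsupp.single 2 1 := by
  simp (config := { decide := true }) [fin3_ext, Finsupp.single_apply]
  omega

lemma rep3 (p : MvPolynomial (Fin 3) ℂ) (hhom : p.IsHomogeneous 2) :
    p = monomial (Finsupp.single 0 2) (coeff (Finsupp.single 0 2) p)
      + monomial (Finsupp.single 1 2) (coeff (Finsupp.single 1 2) p)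
      + monomial (Finsupp.single 2 2) (coeff (Finsupp.single 2 2) p)
      + monomial (Finsupp.single 0 1 + Finsupp.single 1 1)
          (coeff (Finsupp.single 0 1 + Finsupp.single 1 1) p)
      + monomial (Finsupp.single 0 1 + Finsupp.single 2 1)
          (coeff (Finsupp.single 0 1 + Finsupp.single 2 1) p)
      + monomial (Finsupp.single 1 1 + Finsupp.single 2 1)
          (coeff (Finsupp.single 1 1 + Finsupp.single 2 1) p) := by
  ext m
  by_cases hm : m 0 + m 1 + m 2 = 2
  · rcases enum3 m hm with rfl | rfl | rfl | rfl | rfl | rfl <;>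
      simp (config := { decide := true }) [coeff_monomial, fin3_ext, Finsupp.single_apply]
  · rw [hhom.coeff_eq_zero (by rw [fin3_degree]; exact hm)]
    simp only [coeff_add, coeff_monomial]
    rw [if_neg, if_neg, if_neg, if_neg, if_neg, if_neg]
    · simp
    all_goals rintro rfl; exact hm (by simp [Finsupp.add_apply])

lemma mono2 (i : Fin 3) (r : ℂ) :
    (monomial (Finsupp.single i 2) r : MvPolynomial (Fin 3) ℂ) = C r * X i ^ 2 :=
  C_mul_X_pow_eq_monomial.symm

lemma mono11 (i j : Fin 3) (r : ℂ) :
    (monomial (Finsupp.single i 1 + Finsupp.single j 1) r : MvPolynomial (Fin 3) ℂ)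
      = C r * X i * X j := by
  calc (monomial (Finsupp.single i 1 + Finsupp.single j 1) r : MvPolynomial (Fin 3) ℂ)
      = monomial (Finsupp.single i 1) r * monomial (Finsupp.single j 1) 1 := by
        rw [monomial_mul, mul_one]
    _ = (C r * X i ^ 1) * (C 1 * X j ^ 1) := by rw [C_mul_X_pow_eq_monomial, C_mul_X_pow_eq_monomial]
    _ = C r * X i * X j := by rw [map_one, one_mul, pow_one, pow_one]

lemma factor2 (b f c : ℂ) :
    ∃ u1 v1 u2 v2 : ℂ, u1 * u2 = b ∧ u1 * v2 + u2 * v1 = f ∧ v1 * v2 = c := by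
  by_cases hb : b = 0
  · exact ⟨0, 1, f, c, by simp [hb], by ring, by ring⟩
  · obtain ⟨s, hs⟩ := IsAlgClosed.exists_pow_nat_eq (f ^ 2 - 4 * b * c) (n := 2) (by norm_num)
    refine ⟨b, (f + s) / 2, 1, (f - s) / (2 * b), by ring, by field_simp; ring, ?_⟩
    field_simp
    linear_combination -hs

theorem stmt7 (p : MvPolynomial (Fin 3) ℂ) (hhom : p.IsHomogeneous 2) (h0 : p ≠ 0) :
    ∃ A B D : Matrix (Fin 2) (Fin 2) ℂ,
      (Matrix.of fun i j => C (A i j) * X 0 + C (B i j) * X 1 + C (D i j) * X 2).det = p := by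
  set a := coeff (Finsupp.single 0 2) p with ha
  set b := coeff (Finsupp.single 1 2) p with hb
  set c := coeff (Finsupp.single 2 2) p with hc
  set d := coeff (Finsupp.single 0 1 + Finsupp.single 1 1) p with hd
  set e := coeff (Finsupp.single 0 1 + Finsupp.single 2 1) p with he
  set f := coeff (Finsupp.single 1 1 + Finsupp.single 2 1) p with hf
  obtain ⟨u1, v1, u2, v2, h1, h2, h3⟩ := factor2 b f c
  refine ⟨!![1, 0; 0, a], !![0, u1; -u2, d], !![0, v1; -v2, e], ?_⟩
  rw [Matrix.det_fin_two]
  have hp : p = C a * X 0 ^ 2 + C b * X 1 ^ 2 + C c * X 2 ^ 2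
      + C d * X 0 * X 1 + C e * X 0 * X 2 + C f * X 1 * X 2 := by
    conv_lhs => rw [rep3 p hhom]
    rw [mono2, mono2, mono2, mono11, mono11, mono11, ← ha, ← hb, ← hc, ← hd, ← he, ← hf]
  rw [hp, ← h1, ← h2, ← h3]
  simp only [Matrix.of_apply, Matrix.cons_val', Matrix.cons_val_zero, Matrix.cons_val_one,
    Matrix.head_cons, Matrix.empty_val', Matrix.cons_val_fin_one, Matrix.head_fin_const,
    map_one, map_mul, map_add, map_neg, map_zero]
  ring
end

section
/- Let p(x,y,z) be a complex homogeneous cubic with a30 ≠ 0 (coefficient of x^3), let α1, α2, α3 be the roots of p(α,1,0) = 0 and β1, β2, β3 the roots of p(β,0,1) = 0, and let b10 x + b01 y + b00 z be the linear form with p(x,y,z) − a30 ∏_{j=1}^3 (x − αj y − βj z) = yz(b10 x + b01 y + b00 z). Then p(x,y,z) equals the determinant of the 3×3 matrix [[a30(x − α1 y − β1 z), 0, b10 x + b01 y + b00 z], [y, x − α2 y − β2 z, 0], [0, z, x − α3 y − β3 z]]. -/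
open MvPolynomial

theorem stmt8 (p : MvPolynomial (Fin 3) ℂ) (hhom : p.IsHomogeneous 3)
    (a30 : ℂ) (ha : a30 = coeff (Finsupp.single 0 3) p) (ha0 : a30 ≠ 0)
    (α1 α2 α3 β1 β2 β3 b10 b01 b00 : ℂ)
    (hα : ∀ t : ℂ, eval ![t, 1, 0] p = a30 * ((t - α1) * (t - α2) * (t - α3)))
    (hβ : ∀ t : ℂ, eval ![t, 0, 1] p = a30 * ((t - β1) * (t - β2) * (t - β3)))
    (hres : p - C a30 * ((X 0 - C α1 * X 1 - C β1 * X 2) * (X 0 - C α2 * X 1 - C β2 * X 2) *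
        (X 0 - C α3 * X 1 - C β3 * X 2)) =
      X 1 * X 2 * (C b10 * X 0 + C b01 * X 1 + C b00 * X 2)) :
    p = Matrix.det
      !![C a30 * (X 0 - C α1 * X 1 - C β1 * X 2), 0, C b10 * X 0 + C b01 * X 1 + C b00 * X 2;
         X 1, X 0 - C α2 * X 1 - C β2 * X 2, 0;
         0, X 2, X 0 - C α3 * X 1 - C β3 * X 2] := by
  have h := sub_eq_iff_eq_add.mp hres
  rw [h, Matrix.det_fin_three]
  simp [Matrix.cons_val_zero, Matrix.cons_val_one]
  ring
end

section
/- Every complex homogeneous cubic polynomial p(x,y,z) of degree exactly 3 admits a determinantal representation with 3×3 complex matrices: there exist A, B, C ∈ M_3(C) with det(xA + yB + zC) = p(x,y,z). -/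
/-!
Determinantal representations survive invertible linear changes of variables, so after moving a
point where `p` does not vanish to `(1, 0, 0)` we may assume `p = a x³ + x² p₁ + x p₂ + p₃` with
`a ≠ 0` and `p_d` a binary form of degree `d` in `y, z`. Over an algebraically closed field
`p₃ = ℓ b g` with linear forms `ℓ, b, g`, where `ℓ` vanishes at some `(y₀, z₀) ≠ 0`. For linear
forms `μ, h, i`,
  `det [[x, b, 0], [0, a x + μ, ℓ], [g, h, x + i]] = x (a x + μ) (x + i) - x ℓ h + ℓ b g`,
which is `p` as soon as `μ = p₁ - a i` and `(p₁ - a i) i - p₂ = ℓ h`. This quadratic form is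
divisible by `ℓ` iff it vanishes at `(y₀, z₀)`, which is a quadratic equation
`a i₀² - p₁(y₀, z₀) i₀ + p₂(y₀, z₀) = 0` for the value `i₀` of `i` there, solvable as `a ≠ 0`.
-/

open MvPolynomial

open scoped Matrix

section DeterminantalRep

variable {K σ τ : Type*} [CommRing K] [Fintype σ] [Fintype τ]
variable (ι : Type*) [Fintype ι] [DecidableEq ι]

def HasDeterminantalRep (f : (σ → K) → K) : Prop :=
  ∃ A : σ → Matrix ι ι K, ∀ v, (∑ k, v k • A k).det = f v

variable {ι}

theorem HasDeterminantalRep.comp_mulVec {f : (σ → K) → K} (hf : HasDeterminantalRep ι f)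
    (M : Matrix σ τ K) : HasDeterminantalRep ι fun v => f (M *ᵥ v) := by
  obtain ⟨A, hA⟩ := hf
  refine ⟨fun l => ∑ k, M k l • A k, fun v => ?_⟩
  change _ = f (M *ᵥ v)
  rw [← hA]
  congr 1
  simp only [Finset.smul_sum, smul_smul, Matrix.mulVec, dotProduct, Finset.sum_smul]
  rw [Finset.sum_comm]
  simp only [mul_comm]

theorem HasDeterminantalRep.of_comp_mulVec [DecidableEq σ] {f : (σ → K) → K} {M : Matrix σ σ K}
    (hf : HasDeterminantalRep ι fun v => f (M *ᵥ v)) (hM : IsUnit M.det) :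
    HasDeterminantalRep ι f := by
  simpa [Matrix.mulVec_mulVec, Matrix.mul_nonsing_inv M hM] using hf.comp_mulVec M⁻¹

end DeterminantalRep

theorem MvPolynomial.IsHomogeneous.exists_eval_eq_eval_mulVec {K σ : Type*} [CommRing K]
    [Fintype σ] {p : MvPolynomial σ K} {n : ℕ} (hp : p.IsHomogeneous n) (M : Matrix σ σ K) :
    ∃ q : MvPolynomial σ K, q.IsHomogeneous n ∧ ∀ v, eval v q = eval (M *ᵥ v) p := by
  refine ⟨bind₁ (fun i => ∑ j, C (M i j) * X j) p, ?_, fun v => ?_⟩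
  · rw [← one_mul n]
    exact hp.aeval _ fun i => IsHomogeneous.sum _ _ _ fun j _ => isHomogeneous_C_mul_X _ _
  · rw [eval, eval₂Hom_bind₁, eval]
    congr 2
    funext i
    simp [Matrix.mulVec, dotProduct]

section TernaryCubic

variable {K : Type*} [CommRing K]

def IsTernaryCubic (f : (Fin 3 → K) → K) : Prop :=
  ∃ a l₁ l₂ q₁ q₂ q₃ k₀ k₁ k₂ k₃ : K, ∀ v, f v =
    a * v 0 ^ 3 + v 0 ^ 2 * (l₁ * v 1 + l₂ * v 2)
      + v 0 * (q₁ * v 1 ^ 2 + q₂ * v 1 * v 2 + q₃ * v 2 ^ 2)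
      + (k₀ * v 1 ^ 3 + k₁ * v 1 ^ 2 * v 2 + k₂ * v 1 * v 2 ^ 2 + k₃ * v 2 ^ 3)

theorem IsTernaryCubic.add {f g : (Fin 3 → K) → K} (hf : IsTernaryCubic f)
    (hg : IsTernaryCubic g) : IsTernaryCubic (f + g) := by
  obtain ⟨a, l₁, l₂, q₁, q₂, q₃, k₀, k₁, k₂, k₃, hf⟩ := hf
  obtain ⟨a', l₁', l₂', q₁', q₂', q₃', k₀', k₁', k₂', k₃', hg⟩ := hg
  exact ⟨a + a', l₁ + l₁', l₂ + l₂', q₁ + q₁', q₂ + q₂', q₃ + q₃', k₀ + k₀', k₁ + k₁', k₂ + k₂',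
    k₃ + k₃', fun v => by rw [Pi.add_apply, hf, hg]; ring⟩

theorem isTernaryCubic_monomial (a : K) {i j k : ℕ} (h : i + j + k = 3) :
    IsTernaryCubic fun v => a * v 0 ^ i * v 1 ^ j * v 2 ^ k := by
  obtain ⟨hi, hj⟩ : i ≤ 3 ∧ j ≤ 3 - i := by omega
  obtain rfl : k = 3 - i - j := by omega
  interval_cases i <;> interval_cases j <;> simp only [Nat.reduceSub] <;>
  first
    | (refine ⟨a, 0, 0, 0, 0, 0, 0, 0, 0, 0, fun v => ?_⟩; ring1)
    | (refine ⟨0, a, 0, 0, 0, 0, 0, 0, 0, 0, fun v => ?_⟩; ring1)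
    | (refine ⟨0, 0, a, 0, 0, 0, 0, 0, 0, 0, fun v => ?_⟩; ring1)
    | (refine ⟨0, 0, 0, a, 0, 0, 0, 0, 0, 0, fun v => ?_⟩; ring1)
    | (refine ⟨0, 0, 0, 0, a, 0, 0, 0, 0, 0, fun v => ?_⟩; ring1)
    | (refine ⟨0, 0, 0, 0, 0, a, 0, 0, 0, 0, fun v => ?_⟩; ring1)
    | (refine ⟨0, 0, 0, 0, 0, 0, a, 0, 0, 0, fun v => ?_⟩; ring1)
    | (refine ⟨0, 0, 0, 0, 0, 0, 0, a, 0, 0, fun v => ?_⟩; ring1)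
    | (refine ⟨0, 0, 0, 0, 0, 0, 0, 0, a, 0, fun v => ?_⟩; ring1)
    | (refine ⟨0, 0, 0, 0, 0, 0, 0, 0, 0, a, fun v => ?_⟩; ring1)

theorem MvPolynomial.IsHomogeneous.isTernaryCubic_eval {p : MvPolynomial (Fin 3) K}
    (hp : p.IsHomogeneous 3) : IsTernaryCubic fun v => eval v p := by
  have hsum : (fun v => eval v p) = ∑ d ∈ p.support, fun v => eval v (monomial d (coeff d p)) := by
    ext v
    conv_lhs => rw [p.as_sum]
    simp only [Finset.sum_apply, map_sum]
  rw [hsum]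
  refine Finset.sum_induction _ (IsTernaryCubic (K := K)) (fun f g => IsTernaryCubic.add)
    ⟨0, 0, 0, 0, 0, 0, 0, 0, 0, 0, fun v => by simp⟩ fun d hd => ?_
  have hdeg : d 0 + d 1 + d 2 = 3 := by
    simpa [Finsupp.weight_apply, Finsupp.sum_fintype, Fin.sum_univ_three]
      using hp (mem_support_iff.mp hd)
  simpa [eval_monomial, Finsupp.prod_fintype, Fin.prod_univ_three, mul_assoc]
    using isTernaryCubic_monomial (coeff d p) hdeg

end TernaryCubic

namespace IsAlgClosed

variable {K : Type*} [Field K] [IsAlgClosed K]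

theorem exists_quadratic_eq_zero {a : K} (ha : a ≠ 0) (b c : K) :
    ∃ r, a * r ^ 2 + b * r + c = 0 := by
  obtain ⟨r, hr⟩ := exists_root (Polynomial.C a * .X ^ 2 + .C b * .X + .C c)
    (by rw [Polynomial.degree_quadratic ha]; decide)
  exact ⟨r, by simpa using hr⟩

theorem exists_cubic_eq_zero {a : K} (ha : a ≠ 0) (b c d : K) :
    ∃ r, a * r ^ 3 + b * r ^ 2 + c * r + d = 0 := by
  obtain ⟨r, hr⟩ := exists_root (Polynomial.C a * .X ^ 3 + .C b * .X ^ 2 + .C c * .X + .C d)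
    (by rw [Polynomial.degree_cubic ha]; decide)
  exact ⟨r, by simpa using hr⟩

end IsAlgClosed

section BinaryForms

variable {K : Type*} [Field K]

theorem exists_binary_quadratic_eq_mul_of_eq_zero {r₁ r₂ r₃ y₀ z₀ : K} (h₀ : y₀ ≠ 0 ∨ z₀ ≠ 0)
    (hroot : r₁ * y₀ ^ 2 + r₂ * y₀ * z₀ + r₃ * z₀ ^ 2 = 0) :
    ∃ h₁ h₂ : K, ∀ y z,
      r₁ * y ^ 2 + r₂ * y * z + r₃ * z ^ 2 = (z₀ * y - y₀ * z) * (h₁ * y + h₂ * z) := by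
  rcases eq_or_ne z₀ 0 with rfl | hz
  · have hy : y₀ ≠ 0 := h₀.resolve_right (not_not.mpr rfl)
    obtain rfl : r₁ = 0 := by simpa [hy] using hroot
    exact ⟨-r₂ / y₀, -r₃ / y₀, fun y z => by field_simp; ring⟩
  · refine ⟨r₁ / z₀, (r₂ * z₀ + r₁ * y₀) / z₀ ^ 2, fun y z => ?_⟩
    field_simp
    linear_combination z ^ 2 * hroot

variable [IsAlgClosed K]

theorem exists_binary_quadratic_eq_mul (s₁ s₂ s₃ : K) :
    ∃ b₁ b₂ g₁ g₂ : K, ∀ y z, s₁ * y ^ 2 + s₂ * y * z + s₃ * z ^ 2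
      = (b₁ * y + b₂ * z) * (g₁ * y + g₂ * z) := by
  rcases eq_or_ne s₁ 0 with rfl | hs
  · exact ⟨0, 1, s₂, s₃, fun y z => by ring⟩
  · obtain ⟨r, hr⟩ := IsAlgClosed.exists_quadratic_eq_zero hs s₂ s₃
    exact ⟨1, -r, s₁, s₂ + s₁ * r, fun y z => by linear_combination z ^ 2 * hr⟩

theorem exists_binary_cubic_eq_mul (k₀ k₁ k₂ k₃ : K) :
    ∃ y₀ z₀ s₁ s₂ s₃ : K, (y₀ ≠ 0 ∨ z₀ ≠ 0) ∧ ∀ y z,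
      k₀ * y ^ 3 + k₁ * y ^ 2 * z + k₂ * y * z ^ 2 + k₃ * z ^ 3
        = (z₀ * y - y₀ * z) * (s₁ * y ^ 2 + s₂ * y * z + s₃ * z ^ 2) := by
  rcases eq_or_ne k₀ 0 with rfl | hk
  · exact ⟨1, 0, -k₁, -k₂, -k₃, Or.inl one_ne_zero, fun y z => by ring⟩
  · obtain ⟨r, hr⟩ := IsAlgClosed.exists_cubic_eq_zero hk k₁ k₂ k₃
    exact ⟨r, 1, k₀, k₁ + r * k₀, k₂ + r * k₁ + r ^ 2 * k₀, Or.inr one_ne_zero,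
      fun y z => by linear_combination z ^ 3 * hr⟩

end BinaryForms

theorem IsTernaryCubic.hasDeterminantalRep {K : Type*} [Field K] [IsAlgClosed K]
    {f : (Fin 3 → K) → K} (hf : IsTernaryCubic f) (h : f (Pi.single 0 1) ≠ 0) :
    HasDeterminantalRep (Fin 3) f := by
  obtain ⟨a, l₁, l₂, q₁, q₂, q₃, k₀, k₁, k₂, k₃, hf⟩ := hf
  have ha : a ≠ 0 := by simpa [hf] using h
  obtain ⟨y₀, z₀, s₁, s₂, s₃, hyz, hK⟩ := exists_binary_cubic_eq_mul k₀ k₁ k₂ k₃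
  obtain ⟨b₁, b₂, g₁, g₂, hS⟩ := exists_binary_quadratic_eq_mul s₁ s₂ s₃
  obtain ⟨i₀, hi₀⟩ := IsAlgClosed.exists_quadratic_eq_zero ha (-(l₁ * y₀ + l₂ * z₀))
    (q₁ * y₀ ^ 2 + q₂ * y₀ * z₀ + q₃ * z₀ ^ 2)
  obtain ⟨i₁, i₂, hi⟩ : ∃ i₁ i₂, i₁ * y₀ + i₂ * z₀ = i₀ := by
    rcases hyz with hy | hz
    · exact ⟨i₀ / y₀, 0, by field_simp; ring⟩
    · exact ⟨0, i₀ / z₀, by field_simp; ring⟩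
  obtain ⟨h₁, h₂, hR⟩ := exists_binary_quadratic_eq_mul_of_eq_zero
    (r₁ := (l₁ - a * i₁) * i₁ - q₁) (r₂ := (l₁ - a * i₁) * i₂ + (l₂ - a * i₂) * i₁ - q₂)
    (r₃ := (l₂ - a * i₂) * i₂ - q₃) hyz
    (by linear_combination (l₁ * y₀ + l₂ * z₀ - a * (i₁ * y₀ + i₂ * z₀ + i₀)) * hi - hi₀)
  refine ⟨![!![1, 0, 0; 0, a, 0; 0, 0, 1], !![0, b₁, 0; 0, l₁ - a * i₁, z₀; g₁, h₁, i₁],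
    !![0, b₂, 0; 0, l₂ - a * i₂, -y₀; g₂, h₂, i₂]], fun v => ?_⟩
  rw [hf, Fin.sum_univ_three, Matrix.det_fin_three]
  simp only [Matrix.smul_of, Matrix.smul_cons, smul_eq_mul, Matrix.smul_empty, Matrix.of_add_of,
    Matrix.add_cons, Matrix.empty_add_empty, Matrix.of_apply, Matrix.cons_val', Matrix.cons_val_zero,
    Matrix.cons_val_one, Matrix.cons_val, Matrix.cons_val_fin_one, Matrix.head_cons, Matrix.tail_cons]
  linear_combination
    v 0 * hR (v 1) (v 2) - (z₀ * v 1 - y₀ * v 2) * hS (v 1) (v 2) - hK (v 1) (v 2)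

theorem MvPolynomial.exists_apply_ne_zero_and_eval_ne_zero {R σ : Type*} [CommRing R]
    [IsDomain R] [Infinite R] {p : MvPolynomial σ R} (hp : p ≠ 0) (i : σ) :
    ∃ v : σ → R, v i ≠ 0 ∧ eval v p ≠ 0 := by
  obtain ⟨v, hv⟩ : ∃ v, eval v (X i * p) ≠ 0 := by
    by_contra! h
    exact hp ((mul_eq_zero.mp (funext (by simpa using h))).resolve_left (X_ne_zero i))
  exact ⟨v, by simpa using hv⟩

theorem MvPolynomial.IsHomogeneous.hasDeterminantalRep_eval {K : Type*} [Field K]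
    [IsAlgClosed K] {p : MvPolynomial (Fin 3) K} (hp : p.IsHomogeneous 3) (h0 : p ≠ 0) :
    HasDeterminantalRep (Fin 3) fun v => eval v p := by
  obtain ⟨v, hv₀, hv⟩ := exists_apply_ne_zero_and_eval_ne_zero h0 0
  set M := (1 : Matrix (Fin 3) (Fin 3) K).updateCol 0 v
  have hM : M.det = v 0 := by rw [← Matrix.cramer_apply, Matrix.cramer_one]; rfl
  obtain ⟨q, hq, hqp⟩ := hp.exists_eval_eq_eval_mulVec M
  refine HasDeterminantalRep.of_comp_mulVec ?_ (hM ▸ hv₀.isUnit)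
  simp_rw [← hqp]
  have hMv : M *ᵥ Pi.single 0 1 = v := by ext i; simp [M]
  exact hq.isTernaryCubic_eval.hasDeterminantalRep (by rwa [hqp, hMv])

theorem stmt9 (p : MvPolynomial (Fin 3) ℂ) (hhom : p.IsHomogeneous 3) (h0 : p ≠ 0) :
    ∃ A B D : Matrix (Fin 3) (Fin 3) ℂ,
      (Matrix.of fun i j => C (A i j) * X 0 + C (B i j) * X 1 + C (D i j) * X 2).det = p := by
  obtain ⟨A, hA⟩ := hhom.hasDeterminantalRep_eval h0
  simp only at hA
  refine ⟨A 0, A 1, A 2, MvPolynomial.funext fun v => ?_⟩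
  rw [← hA v, RingHom.map_det]
  congr 1
  ext i j
  simp [Fin.sum_univ_three, mul_comm]
end

section
/- Conversely, let p2 = ℓ1·ℓ2 and q2 = ℓ3·ℓ4 be products of nonzero complex linear forms with p2, q2 coprime, such that the pencil s·p2 + t·q2 is degenerate (det of the associated symmetric matrix vanishes for all (s,t)). Then the four lines ℓ1 = 0, ℓ2 = 0, ℓ3 = 0, ℓ4 = 0 have a common point in CP^2. -/
open MvPolynomial Matrix

/-- The linear form with coefficient vector `u`. -/
noncomputable def lf (u : Fin 3 → ℂ) : MvPolynomial (Fin 3) ℂ :=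
  ∑ i, C (u i) * X i

/-- The symmetric 3×3 matrix representing the quadratic form `lf u * lf v`. -/
noncomputable def symOfLines (u v : Fin 3 → ℂ) : Matrix (Fin 3) (Fin 3) ℂ :=
  (1 / 2 : ℂ) • (Matrix.vecMulVec u v + Matrix.vecMulVec v u)

private lemma not_isUnit_lf (u : Fin 3 → ℂ) : ¬ IsUnit (lf u) := by
  intro h
  have h0 : constantCoeff (lf u) = 0 := by simp [lf]
  have h1 := h.map constantCoeff
  rw [h0] at h1
  exact not_isUnit_zero h1

private lemma lf_smul (c : ℂ) (u : Fin 3 → ℂ) : lf (c • u) = C c * lf u := by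
  simp [lf, Finset.mul_sum, mul_assoc]

private lemma indep_of_not_prop {a b : Fin 3 → ℂ} (ha : a ≠ 0) (h : ∀ c : ℂ, b ≠ c • a) :
    LinearIndependent ℂ ![a, b] := by
  rw [linearIndependent_fin2]
  constructor
  · simpa using fun hb => h 0 (by simp [hb])
  · intro c hc
    simp only [Matrix.cons_val_one, Matrix.head_cons, Matrix.cons_val_zero] at hc
    rcases eq_or_ne c 0 with h0 | h0
    · exact ha (by simp [h0] at hc; exact hc.symm)
    · exact h c⁻¹ (by rw [← hc, smul_smul, inv_mul_cancel₀ h0, one_smul])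

private lemma mem_span_of_det_eq_zero {a b c : Fin 3 → ℂ}
    (hd : (Matrix.of ![c, a, b]).det = 0) (hab : LinearIndependent ℂ ![a, b]) :
    c ∈ Submodule.span ℂ {a, b} := by
  by_contra hc
  have hr : Set.range ![a, b] = {a, b} := by simp [Set.range_subset_iff, Set.pair_comm]
  have h1 : LinearIndependent ℂ ![c, a, b] := by
    rw [show (![c, a, b] : Fin 3 → Fin 3 → ℂ) = Fin.cons c ![a, b] from rfl,
      linearIndependent_fin_cons, hr]
    exact ⟨hab, hc⟩
  have hun : IsUnit (Matrix.of ![c, a, b]) :=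
    Matrix.linearIndependent_rows_iff_isUnit.mp h1
  have := (Matrix.isUnit_iff_isUnit_det _).mp hun
  rw [hd] at this
  exact not_isUnit_zero this

private lemma span_two {a b c d : Fin 3 → ℂ}
    (hc : c ∈ Submodule.span ℂ {a, b}) (hd : d ∈ Submodule.span ℂ {a, b}) :
    ∃ x0 : Fin 3 → ℂ, x0 ≠ 0 ∧ a ⬝ᵥ x0 = 0 ∧ b ⬝ᵥ x0 = 0 ∧ c ⬝ᵥ x0 = 0 ∧ d ⬝ᵥ x0 = 0 := by
  set f := (Matrix.of ![a, b]).mulVecLin with hf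
  have hlt : Module.finrank ℂ (Fin 2 → ℂ) < Module.finrank ℂ (Fin 3 → ℂ) := by
    simp [Module.finrank_pi]
  have hker := LinearMap.ker_ne_bot_of_finrank_lt (f := f) hlt
  obtain ⟨x0, hx0mem, hx0⟩ := Submodule.ne_bot_iff _ |>.mp hker
  have ha : a ⬝ᵥ x0 = 0 := by
    have := congr_fun (LinearMap.mem_ker.mp hx0mem) 0
    simpa [f, Matrix.mulVecLin, Matrix.mulVec] using this
  have hb : b ⬝ᵥ x0 = 0 := by
    have := congr_fun (LinearMap.mem_ker.mp hx0mem) 1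
    simpa [f, Matrix.mulVecLin, Matrix.mulVec] using this
  have key : ∀ z : Fin 3 → ℂ, z ∈ Submodule.span ℂ {a, b} → z ⬝ᵥ x0 = 0 := by
    intro z hz
    obtain ⟨s, t, hst⟩ := Submodule.mem_span_pair.mp hz
    rw [← hst, add_dotProduct, smul_dotProduct, smul_dotProduct, ha, hb]
    simp
  exact ⟨x0, hx0, ha, hb, key c hc, key d hd⟩

private lemma det_rot {a b c : Fin 3 → ℂ} (h : (Matrix.of ![a, b, c]).det = 0) :
    (Matrix.of ![c, a, b]).det = 0 := by
  have e : (Matrix.of ![c, a, b]).det = (Matrix.of ![a, b, c]).det := by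
    simp only [Matrix.det_fin_three, Matrix.of_apply, Matrix.cons_val', Matrix.cons_val_zero,
      Matrix.cons_val_one, Matrix.head_cons, Matrix.empty_val', Matrix.cons_val_fin_one,
      Matrix.head_fin_const, Matrix.cons_val_two, Matrix.tail_cons]
    ring
  rw [e, h]

private lemma det_swap {a b c : Fin 3 → ℂ} (h : (Matrix.of ![a, b, c]).det = 0) :
    (Matrix.of ![b, a, c]).det = 0 := by
  have e : (Matrix.of ![b, a, c]).det = -(Matrix.of ![a, b, c]).det := by
    simp only [Matrix.det_fin_three, Matrix.of_apply, Matrix.cons_val', Matrix.cons_val_zero,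
      Matrix.cons_val_one, Matrix.head_cons, Matrix.empty_val', Matrix.cons_val_fin_one,
      Matrix.head_fin_const, Matrix.cons_val_two, Matrix.tail_cons]
    ring
  rw [e, h, neg_zero]

theorem stmt13 (u v w r : Fin 3 → ℂ)
    (hu : u ≠ 0) (hv : v ≠ 0) (hw : w ≠ 0) (hr : r ≠ 0)
    (hcoprime : IsRelPrime (lf u * lf v) (lf w * lf r))
    (hdeg : ∀ s t : ℂ, (s • symOfLines u v + t • symOfLines w r).det = 0) :
    ∃ x0 : Fin 3 → ℂ, x0 ≠ 0 ∧
      u ⬝ᵥ x0 = 0 ∧ v ⬝ᵥ x0 = 0 ∧ w ⬝ᵥ x0 = 0 ∧ r ⬝ᵥ x0 = 0 := by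
  -- non-proportionality from coprimality
  have key : ∀ x y : Fin 3 → ℂ, lf x ∣ lf u * lf v → lf y ∣ lf w * lf r →
      ∀ c : ℂ, y ≠ c • x := by
    intro x y hx hy c hc
    have hxy : lf x ∣ lf y := by rw [hc, lf_smul]; exact dvd_mul_left _ _
    exact not_isUnit_lf x (hcoprime hx (hxy.trans hy))
  have hwu := key u w (dvd_mul_right _ _) (dvd_mul_right _ _)
  have hru := key u r (dvd_mul_right _ _) (dvd_mul_left _ _)
  have hwv := key v w (dvd_mul_left _ _) (dvd_mul_right _ _)
  have hrv := key v r (dvd_mul_left _ _) (dvd_mul_left _ _)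
  -- the two determinant conditions
  have h1 := hdeg 1 1
  have h2 := hdeg 1 (-1)
  simp only [symOfLines, Matrix.det_fin_three, Matrix.add_apply, Matrix.smul_apply,
    Matrix.vecMulVec_apply, smul_eq_mul, Pi.add_apply, Pi.smul_apply, one_mul] at h1 h2
  have E1 : (Matrix.of ![u, v, w]).det * (Matrix.of ![u, v, r]).det = 0 := by
    simp only [Matrix.det_fin_three, Matrix.of_apply, Matrix.cons_val', Matrix.cons_val_zero,
      Matrix.cons_val_one, Matrix.head_cons, Matrix.empty_val', Matrix.cons_val_fin_one,
      Matrix.head_fin_const, Matrix.cons_val_two, Matrix.tail_cons]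
    linear_combination (-2:ℂ)*h1 + (2:ℂ)*h2
  have E2 : (Matrix.of ![u, w, r]).det * (Matrix.of ![v, w, r]).det = 0 := by
    simp only [Matrix.det_fin_three, Matrix.of_apply, Matrix.cons_val', Matrix.cons_val_zero,
      Matrix.cons_val_one, Matrix.head_cons, Matrix.empty_val', Matrix.cons_val_fin_one,
      Matrix.head_fin_const, Matrix.cons_val_two, Matrix.tail_cons]
    linear_combination (-2:ℂ)*h1 + (-2:ℂ)*h2
  rcases mul_eq_zero.mp E1 with d1 | d1 <;> rcases mul_eq_zero.mp E2 with d2 | d2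
  · -- d1 : det ![u,v,w] = 0, d2 : det ![u,w,r] = 0 ; pair (u,w)
    have hind := indep_of_not_prop hu hwu
    obtain ⟨x0, hx0, hax, hbx, hcx, hdx⟩ :=
      span_two (mem_span_of_det_eq_zero (det_swap d1) hind)
        (mem_span_of_det_eq_zero (det_rot d2) hind)
    exact ⟨x0, hx0, hax, hcx, hbx, hdx⟩
  · -- d1 : det ![u,v,w] = 0, d2 : det ![v,w,r] = 0 ; pair (v,w)
    have hind := indep_of_not_prop hv hwv
    obtain ⟨x0, hx0, hax, hbx, hcx, hdx⟩ :=
      span_two (mem_span_of_det_eq_zero d1 hind)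
        (mem_span_of_det_eq_zero (det_rot d2) hind)
    exact ⟨x0, hx0, hcx, hax, hbx, hdx⟩
  · -- d1 : det ![u,v,r] = 0, d2 : det ![u,w,r] = 0 ; pair (u,r)
    have hind := indep_of_not_prop hu hru
    obtain ⟨x0, hx0, hax, hbx, hcx, hdx⟩ :=
      span_two (mem_span_of_det_eq_zero (det_swap d1) hind)
        (mem_span_of_det_eq_zero (det_swap d2) hind)
    exact ⟨x0, hx0, hax, hcx, hdx, hbx⟩
  · -- d1 : det ![u,v,r] = 0, d2 : det ![v,w,r] = 0 ; pair (v,r)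
    have hind := indep_of_not_prop hv hrv
    obtain ⟨x0, hx0, hax, hbx, hcx, hdx⟩ :=
      span_two (mem_span_of_det_eq_zero d1 hind)
        (mem_span_of_det_eq_zero (det_swap d2) hind)
    exact ⟨x0, hx0, hcx, hax, hdx, hbx⟩
end

section
/- Let q2(x,y,z) be a complex homogeneous quadratic and consider the pencil s·q2 + t·xy. The cubic form d(s,t) = det M(s·q2 + t·xy) (where M denotes the associated symmetric 3×3 matrix) equals κ·s^3 for some κ ≠ 0 if and only if q2 is irreducible and either the line y = 0 or the line x = 0 is tangent to the conic q2 = 0 at the point (0,0,1); explicitly, this happens exactly when q2 has the form a20 x^2 + a11 xy + a02 y^2 + a01 yz with a20·a01 ≠ 0, or a20 x^2 + a11 xy + a02 y^2 + a10 xz with a02·a10 ≠ 0. -/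
open MvPolynomial

theorem stmt14 (b20 b11 b02 b10 b01 b00 : ℂ)
    (M1 M2 : Matrix (Fin 3) (Fin 3) ℂ)
    (hM1 : M1 = !![b20, b11 / 2, b10 / 2; b11 / 2, b02, b01 / 2; b10 / 2, b01 / 2, b00])
    (hM2 : M2 = !![0, 1 / 2, 0; 1 / 2, 0, 0; 0, 0, 0]) :
    (∃ κ : ℂ, κ ≠ 0 ∧ ∀ s t : ℂ, (s • M1 + t • M2).det = κ * s ^ 3) ↔
      ((b10 = 0 ∧ b00 = 0 ∧ b20 * b01 ≠ 0) ∨ (b01 = 0 ∧ b00 = 0 ∧ b02 * b10 ≠ 0)) := by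
  have key : ∀ s t : ℂ, (s • M1 + t • M2).det =
      s ^ 3 * (b20 * b02 * b00 - b20 * b01 ^ 2 / 4 - b11 ^ 2 * b00 / 4
        + b11 * b01 * b10 / 4 - b02 * b10 ^ 2 / 4)
      + s ^ 2 * t * (b01 * b10 / 4 - b00 * b11 / 2) - s * t ^ 2 * b00 / 4 := by
    intro s t
    subst hM1 hM2
    simp [Matrix.det_fin_three, Matrix.smul_apply, Matrix.add_apply]
    ring
  constructor
  · rintro ⟨κ, hκ, h⟩
    have h' : ∀ s t : ℂ,
        s ^ 3 * (b20 * b02 * b00 - b20 * b01 ^ 2 / 4 - b11 ^ 2 * b00 / 4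
          + b11 * b01 * b10 / 4 - b02 * b10 ^ 2 / 4)
        + s ^ 2 * t * (b01 * b10 / 4 - b00 * b11 / 2) - s * t ^ 2 * b00 / 4
        = κ * s ^ 3 := fun s t => (key s t).symm.trans (h s t)
    have e0 := h' 1 0
    have e1 := h' 1 1
    have e2 := h' 1 (-1)
    have hb00 : b00 = 0 := by linear_combination (-2 : ℂ) * e1 - 2 * e2 + 4 * e0
    have hb0110 : b01 * b10 = 0 := by
      linear_combination (2 : ℂ) * e1 - 2 * e2 + 2 * b11 * hb00
    rcases mul_eq_zero.mp hb0110 with hc | hc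
    · right
      refine ⟨hc, hb00, fun hz => hκ ?_⟩
      linear_combination -e0 + (b20 * b02 - b11 ^ 2 / 4) * hb00
        - (b20 * b01 / 4 - b11 * b10 / 4) * hc - (b10 / 4) * hz
    · left
      refine ⟨hc, hb00, fun hz => hκ ?_⟩
      linear_combination -e0 + (b20 * b02 - b11 ^ 2 / 4) * hb00
        + (b11 * b01 / 4 - b02 * b10 / 4) * hc - (b01 / 4) * hz
  · rintro (⟨h10, h00, hne⟩ | ⟨h01, h00, hne⟩)
    · refine ⟨-(b20 * b01 ^ 2) / 4, ?_, fun s t => ?_⟩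
      · have h20 := left_ne_zero_of_mul hne
        have h01 := right_ne_zero_of_mul hne
        exact div_ne_zero (neg_ne_zero.mpr (mul_ne_zero h20 (pow_ne_zero 2 h01)))
          (by norm_num)
      · rw [key]; subst h10 h00; ring
    · refine ⟨-(b02 * b10 ^ 2) / 4, ?_, fun s t => ?_⟩
      · have h02 := left_ne_zero_of_mul hne
        have h10 := right_ne_zero_of_mul hne
        exact div_ne_zero (neg_ne_zero.mpr (mul_ne_zero h02 (pow_ne_zero 2 h10)))
          (by norm_num)
      · rw [key]; subst h01 h00; ring
end

section
/- Every complex homogeneous quartic polynomial p(x,y,z) of degree exactly 4 with nonzero coefficient a40 of x^4 admits a 4×4 determinantal representation of the form det of [[a40(x−α1y−β1z), −y, 0, 0], [0, x−α2y−β2z, ℓ1, ℓ3], [0, 0, x−α3y−β3z, ℓ2], [z, 0, 0, x−α4y−β4z]] = p(x,y,z), where αi are the roots of p(α,1,0)=0, βi are the roots of p(β,0,1)=0, and ℓ1, ℓ2, ℓ3 are suitable complex linear forms in x, y, z. -/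
/-!
Put `m j = x - α j y - β j z`. Expanding the determinant along its first row gives
`a40 · ∏ m j + y z (ℓ₁ ℓ₂ - m 2 ℓ₃)`. The quartic `q = p - a40 ∏ m j` vanishes on the lines
`y = 0` and `z = 0` (by the root conditions and homogeneity), so `q = y z q₂` with `q₂` a quadratic
form. Substituting `x = m 2 + α 2 y + β 2 z` turns `q₂` into `m 2 · ℓ + (binary form in y, z)`,
and a binary quadratic form over `ℂ` splits into two linear factors.
-/

open MvPolynomial

namespace MvPolynomial

variable {σ R : Type*}

theorem IsHomogeneous.eval_smul [CommSemiring R] {φ : MvPolynomial σ R} {n : ℕ}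
    (hφ : φ.IsHomogeneous n) (c : R) (v : σ → R) :
    eval (c • v) φ = c ^ n * eval v φ := by
  induction hφ using IsWeightedHomogeneous.induction_on with
  | zero => simp
  | add p q _ _ hp hq => rw [map_add, map_add, hp, hq, mul_add]
  | monomial d r hd =>
    simp only [eval_monomial, Pi.smul_apply, smul_eq_mul, mul_pow, Finsupp.prod_mul]
    rw [← hd, Finsupp.weight_apply, Finsupp.prod, Finsupp.sum, Finset.prod_pow_eq_pow_sum]
    simp only [Pi.one_apply, smul_eq_mul, mul_one]
    ring

theorem X_dvd_sub_bind₁_update_zero [CommRing R] [DecidableEq σ] (i : σ)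
    (p : MvPolynomial σ R) : X i ∣ p - bind₁ (Function.update X i 0) p := by
  induction p using MvPolynomial.induction_on with
  | C a => simp
  | add p q hp hq => simpa only [map_add, add_sub_add_comm] using dvd_add hp hq
  | mul_X p j hp =>
    have : p * X j - bind₁ (Function.update X i 0) (p * X j)
        = (p - bind₁ (Function.update X i 0) p) * X j
          + bind₁ (Function.update X i 0) p * (X j - Function.update X i 0 j) := by
      rw [map_mul, bind₁_X_right]; ring
    rw [this]
    refine dvd_add (hp.mul_right _) (Dvd.dvd.mul_left ?_ _)
    rcases eq_or_ne j i with rfl | hj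
    · simp
    · simp [hj]

theorem X_dvd_of_forall_eval_eq_zero [CommRing R] [IsDomain R] [Infinite R] {i : σ}
    {p : MvPolynomial σ R} (h : ∀ v : σ → R, v i = 0 → eval v p = 0) : X i ∣ p := by
  classical
  have hzero : bind₁ (Function.update X i 0) p = 0 := by
    refine MvPolynomial.funext fun v => ?_
    have : (fun j => eval₂Hom (RingHom.id R) v (Function.update X i 0 j))
        = Function.update v i 0 := by
      ext j; rcases eq_or_ne j i with rfl | hj <;> simp [*]
    rw [eval, eval₂Hom_bind₁, this, map_zero]
    exact h _ (by simp)
  simpa [hzero] using X_dvd_sub_bind₁_update_zero i p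

theorem X_dvd_of_forall_eval_eq_zero_of_ne [CommRing R] [IsDomain R] [Infinite R] {i j : σ}
    (hij : i ≠ j) {p : MvPolynomial σ R}
    (h : ∀ v : σ → R, v i = 0 → v j ≠ 0 → eval v p = 0) : X i ∣ p := by
  have : X i ∣ X j * p := X_dvd_of_forall_eval_eq_zero fun v hv => by
    by_cases hvj : v j = 0 <;> simp [hvj, h v hv]
  exact (X_prime.dvd_or_dvd this).resolve_left (by simpa [X_dvd_X] using hij)

theorem homogeneousComponent_mul_of_isHomogeneous [CommSemiring R] {φ : MvPolynomial σ R}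
    {m : ℕ} (hφ : φ.IsHomogeneous m) (ψ : MvPolynomial σ R) (n : ℕ) :
    homogeneousComponent (m + n) (φ * ψ) = φ * homogeneousComponent n ψ := by
  classical
  conv_lhs => rw [← sum_homogeneousComponent ψ]
  have hterm : ∀ k, homogeneousComponent (m + n) (φ * homogeneousComponent k ψ)
      = if k = n then φ * homogeneousComponent n ψ else 0 := fun k => by
    rw [homogeneousComponent_of_mem (hφ.mul (homogeneousComponent_isHomogeneous k ψ))]
    split_ifs <;> simp_all
  simp only [Finset.mul_sum, map_sum, hterm, Finset.sum_ite_eq', Finset.mem_range]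
  split_ifs with hn
  · rfl
  · rw [homogeneousComponent_eq_zero _ _ (by omega), mul_zero]

end MvPolynomial

theorem exists_eq_X_one_mul_X_two_mul {K : Type*} [Field K] [Infinite K]
    {q : MvPolynomial (Fin 3) K} {n : ℕ} (hq : q.IsHomogeneous (2 + n))
    (hy : ∀ t : K, eval ![t, 1, 0] q = 0) (hz : ∀ t : K, eval ![t, 0, 1] q = 0) :
    ∃ q₂ : MvPolynomial (Fin 3) K, q₂.IsHomogeneous n ∧ q = X 1 * X 2 * q₂ := by
  have hX₂ : X 2 ∣ q := X_dvd_of_forall_eval_eq_zero_of_ne (j := 1) (by decide)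
    fun v hv₂ hv₁ => by
      have hv : v = v 1 • ![v 0 / v 1, 1, 0] := by
        ext i; fin_cases i <;> simp [hv₁, hv₂, mul_div_cancel₀]
      rw [hv, hq.eval_smul, hy, mul_zero]
  have hX₁ : X 1 ∣ q := X_dvd_of_forall_eval_eq_zero_of_ne (j := 2) (by decide)
    fun v hv₁ hv₂ => by
      have hv : v = v 2 • ![v 0 / v 2, 0, 1] := by
        ext i; fin_cases i <;> simp [hv₁, hv₂, mul_div_cancel₀]
      rw [hv, hq.eval_smul, hz, mul_zero]
  obtain ⟨q₁, rfl⟩ := hX₂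
  obtain ⟨q₂, rfl⟩ : X 1 ∣ q₁ := (X_prime.dvd_or_dvd hX₁).resolve_left (by simp [X_dvd_X])
  refine ⟨homogeneousComponent n q₂, homogeneousComponent_isHomogeneous n q₂, ?_⟩
  have hX₁X₂ : (X 1 * X 2 : MvPolynomial (Fin 3) K).IsHomogeneous 2 :=
    (isHomogeneous_X K 1).mul (isHomogeneous_X K 2)
  rw [← homogeneousComponent_mul_of_isHomogeneous hX₁X₂, mul_left_comm, ← mul_assoc,
    homogeneousComponent_eq_self (by rwa [mul_assoc, mul_left_comm])]

theorem IsAlgClosed.exists_factors_of_binary_quadratic {K : Type*} [Field K] [IsAlgClosed K]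
    (A B D : K) : ∃ u₁ u₂ v₁ v₂ : K, A = u₁ * v₁ ∧ B = u₁ * v₂ + u₂ * v₁ ∧ D = u₂ * v₂ := by
  rcases eq_or_ne A 0 with rfl | hA
  · exact ⟨0, 1, B, D, by simp, by ring, by ring⟩
  obtain ⟨ρ, hρ⟩ := IsAlgClosed.exists_root
    (Polynomial.C A * Polynomial.X ^ 2 + Polynomial.C B * Polynomial.X + Polynomial.C D)
    (by rw [Polynomial.degree_quadratic hA]; decide)
  simp only [Polynomial.IsRoot, Polynomial.eval_add, Polynomial.eval_mul, Polynomial.eval_C,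
    Polynomial.eval_pow, Polynomial.eval_X] at hρ
  -- `A y² + B y z + D z² = (y - ρ z) (A y + (B + A ρ) z)` for a root `ρ` of `A t² + B t + D`.
  exact ⟨1, -ρ, A, B + A * ρ, by ring, by ring, by linear_combination hρ⟩

theorem exists_lin_of_isHomogeneous_one {ℓ : MvPolynomial (Fin 3) ℂ} (hℓ : ℓ.IsHomogeneous 1) :
    ∃ r s t : ℂ, ℓ = lin r s t := by
  rw [← mem_homogeneousSubmodule, homogeneousSubmodule_one_eq_span_X,
    Submodule.mem_span_range_iff_exists_fun] at hℓ
  obtain ⟨c, rfl⟩ := hℓ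
  exact ⟨c 0, c 1, c 2, by simp [Fin.sum_univ_three, lin, smul_eq_C_mul]⟩

theorem exists_eq_lin_mul_lin_sub (a b : ℂ) {f : MvPolynomial (Fin 3) ℂ}
    (hf : f.IsHomogeneous 2) :
    ∃ r₁ s₁ t₁ r₂ s₂ t₂ r₃ s₃ t₃ : ℂ,
      f = lin r₁ s₁ t₁ * lin r₂ s₂ t₂ - (X 0 - C a * X 1 - C b * X 2) * lin r₃ s₃ t₃ := by
  obtain ⟨r, s, t, A, B, D, hf⟩ : ∃ r s t A B D : ℂ, f = (X 0 - C a * X 1 - C b * X 2) * lin r s t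
      + (C A * X 1 ^ 2 + C B * (X 1 * X 2) + C D * X 2 ^ 2) := by
    rw [← mem_homogeneousSubmodule, ← homogeneousSubmodule_one_pow, pow_two] at hf
    refine Submodule.mul_induction_on hf (fun ℓ hℓ ℓ' hℓ' => ?_) ?_
    · obtain ⟨r, s, t, rfl⟩ := exists_lin_of_isHomogeneous_one hℓ
      obtain ⟨r', s', t', rfl⟩ := exists_lin_of_isHomogeneous_one hℓ'
      -- `lin r s t = r m + s₀ y + t₀ z` with `m = x - a y - b z`, and likewise for the primed form.
      set s₀ := s + r * a
      set t₀ := t + r * b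
      set s₀' := s' + r' * a
      set t₀' := t' + r' * b
      refine ⟨r * r', r * s₀' + r' * s₀ - r * r' * a, r * t₀' + r' * t₀ - r * r' * b,
        s₀ * s₀', s₀ * t₀' + t₀ * s₀', t₀ * t₀', ?_⟩
      simp only [s₀, t₀, s₀', t₀', lin, map_add, map_mul, map_sub]
      ring
    · rintro _ _ ⟨r, s, t, A, B, D, rfl⟩ ⟨r', s', t', A', B', D', rfl⟩
      exact ⟨r + r', s + s', t + t', A + A', B + B', D + D', by simp only [lin, map_add]; ring⟩
  obtain ⟨u₁, u₂, v₁, v₂, rfl, rfl, rfl⟩ := IsAlgClosed.exists_factors_of_binary_quadratic A B D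
  refine ⟨0, u₁, u₂, 0, v₁, v₂, -r, -s, -t, ?_⟩
  rw [hf]
  simp only [lin, map_add, map_mul, map_neg, map_zero]
  ring

theorem Matrix.det_fin_four_of_sparse {R : Type*} [CommRing R] (a b c d y z ℓ₁ ℓ₂ ℓ₃ : R) :
    Matrix.det !![a, -y, 0, 0; 0, b, ℓ₁, ℓ₃; 0, 0, c, ℓ₂; z, 0, 0, d]
      = a * b * c * d + y * z * (ℓ₁ * ℓ₂ - c * ℓ₃) := by
  rw [Matrix.det_succ_row_zero, Fin.sum_univ_four]
  simp [Matrix.det_fin_three, Fin.succAbove]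
  ring

theorem stmt16_general (p : MvPolynomial (Fin 3) ℂ) (hhom : p.IsHomogeneous 4)
    (a40 : ℂ)
    (α β : Fin 4 → ℂ)
    (hα : ∀ t : ℂ, eval ![t, 1, 0] p = a40 * ∏ j, (t - α j))
    (hβ : ∀ t : ℂ, eval ![t, 0, 1] p = a40 * ∏ j, (t - β j)) :
    ∃ r1 s1 t1 r2 s2 t2 r3 s3 t3 : ℂ,
      p = Matrix.det
        !![C a40 * (X 0 - C (α 0) * X 1 - C (β 0) * X 2), -X 1, 0, 0;
           0, X 0 - C (α 1) * X 1 - C (β 1) * X 2, lin r1 s1 t1, lin r3 s3 t3;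
           0, 0, X 0 - C (α 2) * X 1 - C (β 2) * X 2, lin r2 s2 t2;
           X 2, 0, 0, X 0 - C (α 3) * X 1 - C (β 3) * X 2] := by
  set m : Fin 4 → MvPolynomial (Fin 3) ℂ := fun j => X 0 - C (α j) * X 1 - C (β j) * X 2
  have hm : ∀ j, (m j).IsHomogeneous 1 := fun j =>
    ((isHomogeneous_X ℂ 0).sub (isHomogeneous_C_mul_X (α j) 1)).sub
      (isHomogeneous_C_mul_X (β j) 2)
  have hprod : (∏ j, m j).IsHomogeneous 4 := by
    simpa using IsHomogeneous.prod Finset.univ m (fun _ => 1) fun j _ => hm j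
  obtain ⟨q₂, hq₂, hpq⟩ := exists_eq_X_one_mul_X_two_mul (n := 2) (hhom.sub (hprod.C_mul a40))
    (fun t => by simp [m, hα]) (fun t => by simp [m, hβ])
  obtain ⟨r1, s1, t1, r2, s2, t2, r3, s3, t3, hq₂⟩ := exists_eq_lin_mul_lin_sub (α 2) (β 2) hq₂
  refine ⟨r1, s1, t1, r2, s2, t2, r3, s3, t3, ?_⟩
  rw [Matrix.det_fin_four_of_sparse, ← hq₂, ← hpq, Fin.prod_univ_four]
  ring

theorem stmt16 (p : MvPolynomial (Fin 3) ℂ) (hhom : p.IsHomogeneous 4)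
    (a40 : ℂ) (ha : a40 = coeff (Finsupp.single 0 4) p) (ha0 : a40 ≠ 0)
    (α β : Fin 4 → ℂ)
    (hα : ∀ t : ℂ, eval ![t, 1, 0] p = a40 * ∏ j, (t - α j))
    (hβ : ∀ t : ℂ, eval ![t, 0, 1] p = a40 * ∏ j, (t - β j)) :
    ∃ r1 s1 t1 r2 s2 t2 r3 s3 t3 : ℂ,
      p = Matrix.det
        !![C a40 * (X 0 - C (α 0) * X 1 - C (β 0) * X 2), -X 1, 0, 0;
           0, X 0 - C (α 1) * X 1 - C (β 1) * X 2, lin r1 s1 t1, lin r3 s3 t3;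
           0, 0, X 0 - C (α 2) * X 1 - C (β 2) * X 2, lin r2 s2 t2;
           X 2, 0, 0, X 0 - C (α 3) * X 1 - C (β 3) * X 2] :=
  stmt16_general p hhom a40 α β hα hβ
end
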